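/- Let p ≥ q ≥ 1 and p+q ≤ n−1, and let B¹_{n,p,q} be obtained from the complete bipartite digraph K⃗_{p,q} (parts V_p = {v₁,…,v_p}, V_q = {v_{p+1},…,v_{p+q}}, with all arcs in both directions between parts) by adding the directed path v₁ v_{p+q+1} v_{p+q+2} ⋯ vₙ v_p. Then q(B¹_{n,p,q}) > p+q. -/

import Mathlib

open Matrix

/-- Adjacency matrix of a digraph given by the arc relation `E`. -/
def adjMatrix {V : Type} [Fintype V] (E : V → V → Prop) [DecidableRel E] : Matrix V V ℝ :=
  fun i j => if E i j then 1 else 0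

/-- Outdegree of a vertex in the digraph `E`. -/
def outdeg {V : Type} [Fintype V] (E : V → V → Prop) [DecidableRel E] (i : V) : ℕ :=
  (Finset.univ.filter (fun j => E i j)).card

/-- Signless Laplacian `Q = D⁺ + A` of the digraph `E`. -/
def signlessLaplacian {V : Type} [Fintype V] [DecidableEq V] (E : V → V → Prop)
    [DecidableRel E] : Matrix V V ℝ :=
  Matrix.diagonal (fun i => (outdeg E i : ℝ)) + adjMatrix E

/-- Q-index: the spectral radius of the signless Laplacian of the digraph `E`. -/
noncomputable def qIndex {V : Type} [Fintype V] [DecidableEq V] (E : V → V → Prop)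
    [DecidableRel E] : ℝ :=
  sSup ((fun z : ℂ => ‖z‖) '' spectrum ℂ ((signlessLaplacian E).map Complex.ofReal))

/-- A digraph is strongly connected if every vertex reaches every vertex by a directed path. -/
def StronglyConnected {V : Type} (E : V → V → Prop) : Prop :=
  ∀ i j : V, Relation.ReflTransGen E i j

/-- The digraph on `Fin n` (vertex `v_i` is index `i-1`) obtained from the complete bipartite
digraph `K⃗_{p,q}` with parts `{0,…,p-1}` and `{p,…,p+q-1}` by adding the directed path
`s, p+q, p+q+1, …, n-1, t`. Taking `(s,t)` to be `(0, p-1)`, `(p, p+q-1)`, `(0,0)`, `(p,p)`,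
`(0,p)`, `(p,0)` yields `B¹`, `B²`, `B³`, `B⁴`, `B⁵`, `B⁶` respectively. -/
def Bgen (n p q s t : ℕ) : Fin n → Fin n → Prop := fun i j =>
  (i.val < p ∧ p ≤ j.val ∧ j.val < p + q) ∨
  (j.val < p ∧ p ≤ i.val ∧ i.val < p + q) ∨
  (i.val = s ∧ j.val = p + q) ∨
  (p + q ≤ i.val ∧ j.val = i.val + 1) ∨
  (i.val = n - 1 ∧ j.val = t)

instance (n p q s t : ℕ) : DecidableRel (Bgen n p q s t) := fun i j => by
  unfold Bgen; infer_instance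

/-!
Perturb the Perron vector of `K⃗_{p,q}` (value `q` on `V_p`, `p` on `V_q`, eigenvalue `p + q`):
for small `ε > 0` there is a nonnegative `x ≠ 0` with `Q x ≥ (p + q + ε) x` entrywise, where
`Q` is the signless Laplacian of `B¹_{n,p,q}`. The extra arc out of `v₁` pays for raising `x` on
`v₁` and on `V_q`, and along the added path `x` grows geometrically so that the arc `vₙ → v_p`
closes the cycle. A Collatz–Wielandt bound then gives `q(B¹_{n,p,q}) ≥ p + q + ε`.
-/
open Filter Topology

attribute [local instance] Matrix.linftyOpNormedAddCommGroup Matrix.linftyOpNormedRing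
  Matrix.linftyOpNormedAlgebra

namespace Matrix

variable {ι : Type*} [Fintype ι] {M : Matrix ι ι ℝ}

theorem mulVec_mono_of_nonneg (hM : ∀ i j, 0 ≤ M i j) {x y : ι → ℝ} (h : x ≤ y) :
    M *ᵥ x ≤ M *ᵥ y := fun i =>
  Finset.sum_le_sum fun j _ => mul_le_mul_of_nonneg_left (h j) (hM i j)

theorem pow_smul_le_pow_mulVec [DecidableEq ι] (hM : ∀ i j, 0 ≤ M i j) {x : ι → ℝ} {c : ℝ}
    (hc : 0 ≤ c) (h : c • x ≤ M *ᵥ x) (k : ℕ) : c ^ k • x ≤ (M ^ k) *ᵥ x := by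
  induction k with
  | zero => simp
  | succ k ih =>
    calc c ^ (k + 1) • x = c ^ k • (c • x) := by rw [pow_succ, mul_smul]
      _ ≤ c ^ k • (M *ᵥ x) := smul_le_smul_of_nonneg_left h (pow_nonneg hc k)
      _ = M *ᵥ (c ^ k • x) := (mulVec_smul M _ x).symm
      _ ≤ M *ᵥ ((M ^ k) *ᵥ x) := mulVec_mono_of_nonneg hM ih
      _ = (M ^ (k + 1)) *ᵥ x := by rw [mulVec_mulVec, pow_succ']

theorem linfty_opNorm_map_ofReal (B : Matrix ι ι ℝ) : ‖B.map Complex.ofReal‖ = ‖B‖ := by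
  simp only [linfty_opNorm_def, map_apply, Complex.nnnorm_real]

theorem pow_le_linfty_opNorm_pow [DecidableEq ι] (hM : ∀ i j, 0 ≤ M i j) {x : ι → ℝ} (hx : 0 ≤ x)
    (hx0 : x ≠ 0) {c : ℝ} (hc : 0 ≤ c) (h : c • x ≤ M *ᵥ x) (k : ℕ) : c ^ k ≤ ‖M ^ k‖ := by
  have hck : 0 ≤ c ^ k := pow_nonneg hc k
  have hle : ‖c ^ k • x‖ ≤ ‖(M ^ k) *ᵥ x‖ := by
    refine (pi_norm_le_iff_of_nonneg (norm_nonneg _)).2 fun i => ?_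
    have hi : 0 ≤ (c ^ k • x) i := mul_nonneg hck (hx i)
    rw [Real.norm_of_nonneg hi]
    exact (pow_smul_le_pow_mulVec hM hc h k i).trans
      ((Real.le_norm_self _).trans (norm_le_pi_norm _ i))
  rw [norm_smul, Real.norm_of_nonneg hck] at hle
  exact le_of_mul_le_mul_right (hle.trans (linfty_opNorm_mulVec _ _)) (norm_pos_iff.2 hx0)

/-- Collatz–Wielandt bound: `c ^ k ≤ ‖M ^ k‖` for the `ℓ∞` operator norm, and Gelfand's formula
turns this into `c ≤ ρ(M)`. -/
theorem le_sSup_norm_spectrum_of_smul_le_mulVec [DecidableEq ι] (hM : ∀ i j, 0 ≤ M i j)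
    {x : ι → ℝ} (hx : 0 ≤ x) (hx0 : x ≠ 0) {c : ℝ} (hc : 0 ≤ c) (h : c • x ≤ M *ᵥ x) :
    c ≤ sSup ((fun z : ℂ => ‖z‖) '' spectrum ℂ (M.map Complex.ofReal)) := by
  set A := M.map Complex.ofReal
  have : Nonempty ι := by
    by_contra hι
    exact hx0 (funext fun i => (hι ⟨i⟩).elim)
  have hpow : ∀ k : ℕ, c ^ k ≤ ‖A ^ k‖ := fun k => by
    rw [show A ^ k = (M ^ k).map Complex.ofReal from
        (Complex.ofRealHom.mapMatrix.map_pow M k).symm, linfty_opNorm_map_ofReal]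
    exact pow_le_linfty_opNorm_pow hM hx hx0 hc h k
  have hrad : ENNReal.ofReal c ≤ spectralRadius ℂ A := by
    refine ge_of_tendsto (spectrum.pow_norm_pow_one_div_tendsto_nhds_spectralRadius A) ?_
    filter_upwards [eventually_ne_atTop 0] with k hk
    refine ENNReal.ofReal_le_ofReal ?_
    calc c = (c ^ k) ^ (1 / k : ℝ) := by rw [one_div, Real.pow_rpow_inv_natCast hc hk]
      _ ≤ ‖A ^ k‖ ^ (1 / k : ℝ) := by gcongr; exact hpow k
  obtain ⟨z, hz, hzr⟩ := spectrum.exists_nnnorm_eq_spectralRadius A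
  have hcz : c ≤ ‖z‖ := by
    rwa [← hzr, ← enorm_eq_nnnorm, ← ofReal_norm, ENNReal.ofReal_le_ofReal_iff (norm_nonneg z)]
      at hrad
  exact hcz.trans (le_csSup (A.finite_spectrum.image _).bddAbove ⟨z, hz, rfl⟩)

end Matrix

section SignlessLaplacian

variable {V : Type} [Fintype V] [DecidableEq V] (E : V → V → Prop) [DecidableRel E]

theorem signlessLaplacian_nonneg (i j : V) : 0 ≤ signlessLaplacian E i j := by
  rw [signlessLaplacian, Matrix.add_apply, diagonal_apply, adjMatrix]
  exact add_nonneg (by split_ifs <;> positivity) (by split_ifs <;> norm_num)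

theorem signlessLaplacian_mulVec_apply (x : V → ℝ) (i : V) :
    (signlessLaplacian E *ᵥ x) i = outdeg E i * x i + ∑ j ∈ Finset.univ.filter (E i), x j := by
  rw [signlessLaplacian, add_mulVec, Pi.add_apply, mulVec_diagonal, Finset.sum_filter]
  simp [adjMatrix, mulVec, dotProduct]

variable {E}

theorem card_mul_add_sum_le_signlessLaplacian_mulVec {x : V → ℝ} (hx : 0 ≤ x) {i : V}
    {S : Finset V} (hS : ∀ j ∈ S, E i j) :
    S.card * x i + ∑ j ∈ S, x j ≤ (signlessLaplacian E *ᵥ x) i := by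
  have hsub : S ⊆ Finset.univ.filter (E i) := fun j hj => by simpa using hS j hj
  rw [signlessLaplacian_mulVec_apply]
  exact add_le_add
    (mul_le_mul_of_nonneg_right (by exact_mod_cast Finset.card_le_card hsub) (hx i))
    (Finset.sum_le_sum_of_subset_of_nonneg hsub fun j _ _ => hx j)

theorem le_qIndex_of_smul_le_mulVec {x : V → ℝ} (hx : 0 ≤ x) (hx0 : x ≠ 0) {c : ℝ}
    (hc : 0 ≤ c) (h : c • x ≤ signlessLaplacian E *ᵥ x) : c ≤ qIndex E :=
  Matrix.le_sSup_norm_spectrum_of_smul_le_mulVec (signlessLaplacian_nonneg E) hx hx0 hc h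

end SignlessLaplacian

theorem Finset.sum_attachFin_Ico_of_eq {n a b : ℕ} (hb : ∀ m ∈ Finset.Ico a b, m < n)
    {x : Fin n → ℝ} {v : ℝ} (hv : ∀ j : Fin n, a ≤ j.val → j.val < b → x j = v) :
    ∑ j ∈ (Finset.Ico a b).attachFin hb, x j = (b - a : ℕ) * v := by
  rw [Finset.sum_eq_card_nsmul fun j hj => ?_, Finset.card_attachFin, Nat.card_Ico, nsmul_eq_mul]
  rw [Finset.mem_attachFin, Finset.mem_Ico] at hj
  exact hv j hj.1 hj.2

abbrev B1 (n p q : ℕ) : Fin n → Fin n → Prop := Bgen n p q 0 (p - 1)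

/-- On the added path, `x` is `q / tᵏ` at the vertex `k` arcs before `v_p`, with
`t = p + q + ε - 1`, so that every path inequality of `Q x ≥ (p + q + ε) x` is an equality. -/
noncomputable def b1TestVector (n p q : ℕ) (ε : ℝ) (i : Fin n) : ℝ :=
  if i.val = 0 then q + ε * (p + q + ε)
  else if i.val < p then q
  else if i.val < p + q then p + ε
  else q / (p + q + ε - 1) ^ (n - i.val)

section TestVector

variable {n p q : ℕ} {ε : ℝ}

theorem b1TestVector_of_val_eq_zero {i : Fin n} (h : i.val = 0) :
    b1TestVector n p q ε i = q + ε * (p + q + ε) := by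
  simp [b1TestVector, h]

theorem b1TestVector_of_mem_left {i : Fin n} (h0 : i.val ≠ 0) (h : i.val < p) :
    b1TestVector n p q ε i = q := by
  simp [b1TestVector, h0, h]

theorem b1TestVector_of_mem_right {i : Fin n} (h0 : i.val ≠ 0) (h1 : p ≤ i.val)
    (h2 : i.val < p + q) : b1TestVector n p q ε i = p + ε := by
  simp [b1TestVector, h0, h2, not_lt.2 h1]

theorem b1TestVector_of_mem_path {i : Fin n} (h0 : i.val ≠ 0) (h : p + q ≤ i.val) :
    b1TestVector n p q ε i = q / (p + q + ε - 1) ^ (n - i.val) := by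
  simp [b1TestVector, h0, not_lt.2 h, not_lt.2 (le_trans (Nat.le_add_right p q) h)]

theorem b1TestVector_base_pos (hp : 0 < p) (hε : 0 < ε) : (0 : ℝ) < p + q + ε - 1 := by
  have : (1 : ℝ) ≤ p := by exact_mod_cast hp
  linarith [(Nat.cast_nonneg q : (0 : ℝ) ≤ q)]

theorem b1TestVector_nonneg (hp : 0 < p) (hε : 0 < ε) : 0 ≤ b1TestVector n p q ε := by
  intro i
  have := b1TestVector_base_pos (q := q) hp hε
  unfold b1TestVector
  split_ifs <;> positivity

theorem le_b1TestVector_of_lt (hε : 0 < ε) {i : Fin n} (hi : i.val < p) :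
    (q : ℝ) ≤ b1TestVector n p q ε i := by
  by_cases h0 : i.val = 0
  · rw [b1TestVector_of_val_eq_zero h0]
    have : 0 ≤ ε * (p + q + ε) := by positivity
    linarith
  · rw [b1TestVector_of_mem_left h0 hi]

theorem b1TestVector_ne_zero (hq : 0 < q) (hε : 0 < ε) (hn : 0 < n) :
    b1TestVector n p q ε ≠ 0 := by
  intro h
  have h0 := congrFun h ⟨0, hn⟩
  rw [b1TestVector_of_val_eq_zero rfl, Pi.zero_apply] at h0
  have : (0 : ℝ) < q := by exact_mod_cast hq
  have : 0 ≤ ε * (p + q + ε) := by positivity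
  linarith

end TestVector

section SuperEigenvector

variable {n p q : ℕ} {ε : ℝ}

local notation "x" => b1TestVector n p q ε
local notation "Q" => signlessLaplacian (B1 n p q)

theorem b1TestVector_le_mulVec_of_val_eq_zero (hp : 0 < p) (hn : p + q + 1 ≤ n) (hε : 0 < ε)
    (hsmall : (p + ε - 1) * ε * (p + q + ε) ≤ q) {i : Fin n} (hi : i.val = 0) :
    (p + q + ε) * x i ≤ (Q *ᵥ x) i := by
  have hb : ∀ m ∈ Finset.Ico p (p + q), m < n := fun m hm => by
    have := Finset.mem_Ico.1 hm; omega
  have hS : ∀ j ∈ insert ⟨p + q, by omega⟩ ((Finset.Ico p (p + q)).attachFin hb),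
      B1 n p q i j := by
    intro j hj
    rcases Finset.mem_insert.1 hj with rfl | hj
    · exact Or.inr (Or.inr (Or.inl ⟨hi, rfl⟩))
    · rw [Finset.mem_attachFin, Finset.mem_Ico] at hj
      simp only [Bgen]; omega
  have hx : 0 ≤ x := b1TestVector_nonneg hp hε
  have key := card_mul_add_sum_le_signlessLaplacian_mulVec hx hS
  rw [Finset.card_insert_of_notMem (by simp), Finset.sum_insert (by simp), Finset.card_attachFin,
    Nat.card_Ico, Finset.sum_attachFin_Ico_of_eq hb (v := p + ε)
      fun j h1 h2 => b1TestVector_of_mem_right (by omega) h1 h2,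
    b1TestVector_of_val_eq_zero hi] at key
  rw [b1TestVector_of_val_eq_zero hi]
  have hpath : 0 ≤ x ⟨p + q, by omega⟩ := hx _
  push_cast [Nat.add_sub_cancel_left] at key
  linear_combination key + hsmall + hpath

theorem b1TestVector_le_mulVec_of_mem_left (hp : 0 < p) (hn : p + q + 1 ≤ n) (hε : 0 < ε)
    {i : Fin n} (h0 : i.val ≠ 0) (hi : i.val < p) : (p + q + ε) * x i ≤ (Q *ᵥ x) i := by
  have hb : ∀ m ∈ Finset.Ico p (p + q), m < n := fun m hm => by
    have := Finset.mem_Ico.1 hm; omega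
  have hS : ∀ j ∈ (Finset.Ico p (p + q)).attachFin hb, B1 n p q i j := by
    intro j hj
    rw [Finset.mem_attachFin, Finset.mem_Ico] at hj
    simp only [Bgen]; omega
  have hx : 0 ≤ x := b1TestVector_nonneg hp hε
  have key := card_mul_add_sum_le_signlessLaplacian_mulVec hx hS
  rw [Finset.card_attachFin, Nat.card_Ico, Finset.sum_attachFin_Ico_of_eq hb (v := p + ε)
      fun j h1 h2 => b1TestVector_of_mem_right (by omega) h1 h2,
    b1TestVector_of_mem_left h0 hi] at key
  rw [b1TestVector_of_mem_left h0 hi]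
  push_cast [Nat.add_sub_cancel_left] at key
  linear_combination key

theorem b1TestVector_le_mulVec_of_mem_right (hp : 0 < p) (hε : 0 < ε) {i : Fin n}
    (h1 : p ≤ i.val) (h2 : i.val < p + q) : (p + q + ε) * x i ≤ (Q *ᵥ x) i := by
  have hb : ∀ m ∈ Finset.Ico 1 p, m < n := fun m hm => by
    have := Finset.mem_Ico.1 hm; omega
  have hS : ∀ j ∈ insert ⟨0, by omega⟩ ((Finset.Ico 1 p).attachFin hb), B1 n p q i j := by
    intro j hj
    rcases Finset.mem_insert.1 hj with rfl | hj
    · exact Or.inr (Or.inl ⟨hp, h1, h2⟩)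
    · rw [Finset.mem_attachFin, Finset.mem_Ico] at hj
      simp only [Bgen]; omega
  have hx : 0 ≤ x := b1TestVector_nonneg hp hε
  have key := card_mul_add_sum_le_signlessLaplacian_mulVec hx hS
  rw [Finset.card_insert_of_notMem (by simp), Finset.sum_insert (by simp), Finset.card_attachFin,
    Nat.card_Ico, Finset.sum_attachFin_Ico_of_eq hb (v := q)
      fun j h1 h2 => b1TestVector_of_mem_left (by omega) h2,
    b1TestVector_of_val_eq_zero (i := ⟨0, by omega⟩) rfl,
    b1TestVector_of_mem_right (by omega) h1 h2] at key
  rw [b1TestVector_of_mem_right (by omega) h1 h2]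
  push_cast [Nat.cast_sub hp] at key
  linear_combination key

theorem b1TestVector_succ_of_mem_path (hp : 0 < p) (hε : 0 < ε) {i : Fin n} (h0 : i.val ≠ 0)
    (hi : p + q ≤ i.val) (hsucc : i.val + 1 < n) :
    x ⟨i.val + 1, hsucc⟩ = (p + q + ε - 1) * x i := by
  rw [b1TestVector_of_mem_path (Nat.succ_ne_zero _) (Nat.le_succ_of_le hi),
    b1TestVector_of_mem_path h0 hi,
    show n - i.val = n - (i.val + 1) + 1 by omega, pow_succ]
  have := b1TestVector_base_pos (q := q) hp hε
  field_simp

theorem b1TestVector_le_mulVec_of_mem_path (hp : 0 < p) (hε : 0 < ε) {i : Fin n}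
    (hi : p + q ≤ i.val) (hsucc : i.val + 1 < n) : (p + q + ε) * x i ≤ (Q *ᵥ x) i := by
  have hS : ∀ j ∈ ({⟨i.val + 1, hsucc⟩} : Finset (Fin n)), B1 n p q i j := by
    intro j hj
    rw [Finset.mem_singleton.1 hj]
    exact Or.inr (Or.inr (Or.inr (Or.inl ⟨hi, rfl⟩)))
  have hx : 0 ≤ x := b1TestVector_nonneg hp hε
  have key := card_mul_add_sum_le_signlessLaplacian_mulVec hx hS
  rw [Finset.card_singleton, Finset.sum_singleton,
    b1TestVector_succ_of_mem_path hp hε (by omega) hi hsucc] at key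
  linear_combination key

theorem b1TestVector_le_mulVec_of_val_eq_sub_one (hp : 0 < p) (hε : 0 < ε) {i : Fin n}
    (hi : p + q ≤ i.val) (hlast : i.val = n - 1) : (p + q + ε) * x i ≤ (Q *ᵥ x) i := by
  have hS : ∀ j ∈ ({⟨p - 1, by omega⟩} : Finset (Fin n)), B1 n p q i j := by
    intro j hj
    rw [Finset.mem_singleton.1 hj]
    exact Or.inr (Or.inr (Or.inr (Or.inr ⟨hlast, rfl⟩)))
  have hx : 0 ≤ x := b1TestVector_nonneg hp hε
  have key := card_mul_add_sum_le_signlessLaplacian_mulVec hx hS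
  have hq : (q : ℝ) ≤ x ⟨p - 1, by omega⟩ := le_b1TestVector_of_lt hε (Nat.sub_lt hp one_pos)
  rw [Finset.card_singleton, Finset.sum_singleton] at key
  rw [b1TestVector_of_mem_path (by omega) hi, show n - i.val = 1 by omega, pow_one] at key ⊢
  have := b1TestVector_base_pos (q := q) hp hε
  have hcycle : (p + q + ε) * (q / (p + q + ε - 1)) = q / (p + q + ε - 1) + q := by
    field_simp
    ring
  linear_combination key + hq + hcycle

theorem smul_b1TestVector_le_mulVec (hp : 0 < p) (hn : p + q + 1 ≤ n) (hε : 0 < ε)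
    (hsmall : (p + ε - 1) * ε * (p + q + ε) ≤ q) : (p + q + ε) • x ≤ Q *ᵥ x := by
  intro i
  rw [Pi.smul_apply, smul_eq_mul]
  by_cases h0 : i.val = 0
  · exact b1TestVector_le_mulVec_of_val_eq_zero hp hn hε hsmall h0
  rcases lt_or_ge i.val p with h1 | h1
  · exact b1TestVector_le_mulVec_of_mem_left hp hn hε h0 h1
  rcases lt_or_ge i.val (p + q) with h2 | h2
  · exact b1TestVector_le_mulVec_of_mem_right hp hε h1 h2
  rcases lt_or_ge (i.val + 1) n with h3 | h3
  · exact b1TestVector_le_mulVec_of_mem_path hp hε h2 h3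
  · exact b1TestVector_le_mulVec_of_val_eq_sub_one hp hε h2 (by omega)

end SuperEigenvector

/-- For `p ≥ q ≥ 1` and `p + q ≤ n - 1`, the digraph `B¹_{n,p,q}` (obtained from `K⃗_{p,q}` by
adding the directed path `v₁ v_{p+q+1} ⋯ vₙ v_p`) satisfies `q(B¹_{n,p,q}) > p + q`. -/
theorem stmt9 (n p q : ℕ) (hq : 1 ≤ q) (hqp : q ≤ p) (hn : p + q + 1 ≤ n) :
    qIndex (Bgen n p q 0 (p - 1)) > (p : ℝ) + q := by
  have hp : 0 < p := lt_of_lt_of_le hq hqp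
  have hq0 : (0 : ℝ) < q := by exact_mod_cast hq
  have hsmall : ∀ᶠ ε : ℝ in 𝓝[>] 0, (p + ε - 1) * ε * (p + q + ε) ≤ q := by
    have hcont : Continuous fun ε : ℝ => (p + ε - 1) * ε * (p + q + ε) := by fun_prop
    exact (hcont.tendsto' 0 0 (by simp)).mono_left nhdsWithin_le_nhds |>.eventually
      (ge_mem_nhds hq0)
  obtain ⟨ε, hsmall, hε : 0 < ε⟩ := (hsmall.and self_mem_nhdsWithin).exists
  calc (p : ℝ) + q < p + q + ε := by linarith
    _ ≤ qIndex (B1 n p q) :=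
      le_qIndex_of_smul_le_mulVec (b1TestVector_nonneg hp hε)
        (b1TestVector_ne_zero hq hε (by omega)) (by positivity)
        (smul_b1TestVector_le_mulVec hp hn hε hsmall)
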